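/- The generalized winding number is locally constant: if f, g : ℝ → S¹ are pre-periodic functions with sup_{x ∈ ℝ} |f(x) − g(x)| < 1/8, then the generalized winding numbers of f and g are equal, i.e. for any lifts f̃ of f and g̃ of g, lim_{x→+∞} (f̃(x) − f̃(−x))/(2x) = lim_{x→+∞} (g̃(x) − g̃(−x))/(2x). -/

import Mathlib

open Filter

/-- A continuous function `f : ℝ → ℂ` taking values in the unit circle `S¹` is *pre-periodic*
if for every `ε > 0` there is a positive integer `N` such that
`|f (x + k * N) - f x| < ε` for all integers `k` and all real `x`. -/
def PrePeriodic (f : ℝ → ℂ) : Prop :=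
  Continuous f ∧ (∀ x : ℝ, ‖f x‖ = 1) ∧
    ∀ ε : ℝ, 0 < ε → ∃ N : ℕ, 0 < N ∧
      ∀ (k : ℤ) (x : ℝ), ‖f (x + (k : ℝ) * (N : ℝ)) - f x‖ < ε

/-- `F : ℝ → ℝ` is a lift of `f : ℝ → S¹ ⊆ ℂ` if `F` is continuous and
`f x = e^{2 π i F x}` for all `x`. -/
def IsLift (f : ℝ → ℂ) (F : ℝ → ℝ) : Prop :=
  Continuous F ∧ ∀ x : ℝ, f x = Complex.exp (2 * Real.pi * Complex.I * (F x : ℂ))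

/-!
If `F - G` took a value in `ℤ + 1/2` somewhere, `f` and `g` would be antipodal there, at distance
`2 > 1/8`. So the continuous function `F - G` avoids `ℤ + 1/2` and, by connectedness of `ℝ`, stays
in one interval between consecutive half-integers. Hence `(F x - F (-x)) - (G x - G (-x))` is
bounded, and dividing by `2 x` kills it in the limit.
-/

namespace IsLift

variable {f g : ℝ → ℂ} {F G : ℝ → ℝ}

theorem norm_eq_one (hF : IsLift f F) (x : ℝ) : ‖f x‖ = 1 := by
  rw [hF.2 x, Complex.norm_exp]
  simp

theorem norm_sub_le_two (hF : IsLift f F) (hG : IsLift g G) (x : ℝ) : ‖f x - g x‖ ≤ 2 := by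
  calc ‖f x - g x‖ ≤ ‖f x‖ + ‖g x‖ := norm_sub_le _ _
    _ = 2 := by rw [hF.norm_eq_one, hG.norm_eq_one]; norm_num

theorem norm_sub_eq_two_of_sub_eq_int_add_half (hF : IsLift f F) (hG : IsLift g G) {x : ℝ}
    {n : ℤ} (hx : F x - G x = n + 1 / 2) : ‖f x - g x‖ = 2 := by
  have hfx : f x = -g x := by
    rw [hF.2, hG.2, show F x = G x + n + 1 / 2 by linarith]
    push_cast
    rw [show 2 * Real.pi * Complex.I * (G x + n + 1 / 2)
        = 2 * Real.pi * Complex.I * G x + n * (2 * Real.pi * Complex.I) + Real.pi * Complex.I by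
      ring, Complex.exp_add, Complex.exp_add, Complex.exp_int_mul_two_pi_mul_I,
      Complex.exp_pi_mul_I]
    ring
  rw [hfx, ← neg_add', norm_neg, ← two_mul, norm_mul, hG.norm_eq_one]
  norm_num

end IsLift

theorem Continuous.abs_sub_lt_one_of_ne_int_add_half {X : Type*} [TopologicalSpace X]
    [PreconnectedSpace X] {h : X → ℝ} (hc : Continuous h) (hh : ∀ x (n : ℤ), h x ≠ n + 1 / 2)
    (x y : X) : |h x - h y| < 1 := by
  set n := ⌊h x + 1 / 2⌋
  have hn₁ : (n : ℝ) ≤ h x + 1 / 2 := Int.floor_le _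
  have hn₂ : h x + 1 / 2 < n + 1 := Int.lt_floor_add_one _
  have hx : (n : ℝ) - 1 / 2 < h x := by
    refine lt_of_le_of_ne (by linarith) fun heq => hh x (n - 1) ?_
    push_cast; linarith
  have hy₁ : h y < n + 1 / 2 := by
    by_contra! hle
    obtain ⟨z, hz⟩ := intermediate_value_univ x y hc ⟨by linarith, hle⟩
    exact hh z n hz
  have hy₂ : (n : ℝ) - 1 / 2 < h y := by
    by_contra! hle
    obtain ⟨z, hz⟩ := intermediate_value_univ y x hc ⟨hle, hx.le⟩
    exact hh z (n - 1) (by push_cast; linarith)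
  rw [abs_lt]; constructor <;> linarith

theorem tendsto_div_atTop_zero_of_abs_le {u : ℝ → ℝ} {C : ℝ} (hu : ∀ x, |u x| ≤ C) :
    Tendsto (fun x => u x / x) atTop (nhds 0) := by
  simpa only [div_eq_inv_mul] using
    tendsto_inv_atTop_zero.zero_mul_isBoundedUnder_le (isBoundedUnder_of ⟨C, hu⟩)

theorem generalized_winding_number_locally_constant_general (f g : ℝ → ℂ) (F G : ℝ → ℝ) (a b : ℝ)
    (hfg : (⨆ x : ℝ, ‖f x - g x‖) < 1 / 8)
    (hF : IsLift f F) (hG : IsLift g G)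
    (ha : Tendsto (fun x : ℝ => (F x - F (-x)) / (2 * x)) atTop (nhds a))
    (hb : Tendsto (fun x : ℝ => (G x - G (-x)) / (2 * x)) atTop (nhds b)) :
    a = b := by
  have hlt : ∀ x, ‖f x - g x‖ < 2 := fun x =>
    ((le_ciSup ⟨2, Set.forall_mem_range.2 (hF.norm_sub_le_two hG)⟩ x).trans_lt hfg).trans
      (by norm_num)
  have hosc : ∀ x y, |(F x - G x) - (F y - G y)| < 1 :=
    (hF.1.sub hG.1).abs_sub_lt_one_of_ne_int_add_half fun x _ hx =>
      (hlt x).ne (hF.norm_sub_eq_two_of_sub_eq_int_add_half hG hx)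
  have hzero : Tendsto (fun x => ((F x - G x) - (F (-x) - G (-x))) / 2 / x) atTop (nhds 0) :=
    tendsto_div_atTop_zero_of_abs_le (C := 1 / 2) fun x => by
      rw [abs_div, abs_two]; linarith [hosc x (-x)]
  refine sub_eq_zero.1 (tendsto_nhds_unique (ha.sub hb) (hzero.congr fun x => ?_))
  ring

/-- The generalized winding number is locally constant: if pre-periodic functions `f` and `g`
satisfy `sup_x |f x - g x| < 1/8`, then their generalized winding numbers coincide. -/
theorem generalized_winding_number_locally_constant (f g : ℝ → ℂ) (F G : ℝ → ℝ) (a b : ℝ)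
    (hf : PrePeriodic f) (hg : PrePeriodic g)
    (hfg : (⨆ x : ℝ, ‖f x - g x‖) < 1 / 8)
    (hF : IsLift f F) (hG : IsLift g G)
    (ha : Tendsto (fun x : ℝ => (F x - F (-x)) / (2 * x)) atTop (nhds a))
    (hb : Tendsto (fun x : ℝ => (G x - G (-x)) / (2 * x)) atTop (nhds b)) :
    a = b :=
  generalized_winding_number_locally_constant_general f g F G a b hfg hF hG ha hb
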